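/- Fix real constants E, K, n' > 0. For every s > 0 there exists a unique σ > 0 satisfying σ²/E + σ·(σ/K)^{1/n'} = s²/E. Moreover, the resulting map SD : (0, ∞) → (0, ∞), sending s to this unique σ, is strictly monotonically increasing, maps (0, ∞) bijectively onto (0, ∞), and is infinitely differentiable on (0, ∞) (any function agreeing with SD on (0,∞) is ContDiffOn of order ∞ on (0,∞)). -/

import Mathlib

open Filter Set Topology

private lemma aux_mono {E K c : ℝ} (hE : 0 < E) (hK : 0 < K) (hc : 0 < c) :
    StrictMonoOn (fun x : ℝ => x ^ 2 / E + x * (x / K) ^ c) (Set.Ici 0) := by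
  intro a ha b hb hab
  simp only [Set.mem_Ici] at ha hb
  have h1 : a ^ 2 / E < b ^ 2 / E := by
    have hsq : a ^ 2 < b ^ 2 := by nlinarith
    rw [div_lt_div_iff₀ hE hE]
    exact mul_lt_mul_of_pos_right hsq hE
  have hr : (a / K) ^ c ≤ (b / K) ^ c :=
    Real.rpow_le_rpow (by positivity) (by gcongr) hc.le
  have h2 : a * (a / K) ^ c ≤ b * (b / K) ^ c :=
    mul_le_mul hab.le hr (Real.rpow_nonneg (by positivity) c) (le_trans ha hab.le)
  simp only
  linarith

private lemma aux_cont {E K c : ℝ} (hc : 0 < c) :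
    Continuous (fun x : ℝ => x ^ 2 / E + x * (x / K) ^ c) := by
  apply Continuous.add (by continuity)
  apply continuous_id.mul
  rw [continuous_iff_continuousAt]
  intro x
  have h1 : ContinuousAt (fun y : ℝ => y ^ c) (x / K) :=
    Real.continuousAt_rpow_const _ _ (Or.inr hc.le)
  have h2 : ContinuousAt (fun x : ℝ => x / K) x := continuousAt_id.div_const K
  exact ContinuousAt.comp (f := fun x : ℝ => x / K) h1 h2

private lemma aux_exists {E K c : ℝ} (hE : 0 < E) (hK : 0 < K) (hc : 0 < c)
    (s : ℝ) (hs : 0 < s) :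
    ∃ σ : ℝ, 0 < σ ∧ σ ^ 2 / E + σ * (σ / K) ^ c = s ^ 2 / E := by
  have h0 : (0 : ℝ) ^ 2 / E + 0 * ((0 : ℝ) / K) ^ c = 0 := by simp
  have hs2 : 0 < s ^ 2 / E := by positivity
  have hgs : s ^ 2 / E ≤ s ^ 2 / E + s * (s / K) ^ c := by
    have : 0 < s * (s / K) ^ c := by positivity
    linarith
  obtain ⟨σ, hσmem, hσ⟩ := intermediate_value_Icc hs.le ((aux_cont (K := K) hc).continuousOn)
    (Set.mem_Icc.mpr ⟨by rw [h0]; exact hs2.le, hgs⟩)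
  simp only at hσ
  refine ⟨σ, ?_, hσ⟩
  rcases eq_or_lt_of_le hσmem.1 with h | h
  · exfalso
    rw [← h] at hσ
    rw [h0] at hσ
    exact hs2.ne hσ
  · exact h

theorem stmt3 (E K n' : ℝ) (hE : 0 < E) (hK : 0 < K) (hn : 0 < n') :
    (∀ s : ℝ, 0 < s → ∃! σ : ℝ, 0 < σ ∧ σ ^ 2 / E + σ * (σ / K) ^ (1 / n') = s ^ 2 / E) ∧
    (∀ SD : ℝ → ℝ,
      (∀ s : ℝ, 0 < s → 0 < SD s ∧ (SD s) ^ 2 / E + SD s * (SD s / K) ^ (1 / n') = s ^ 2 / E) →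
      StrictMonoOn SD (Set.Ioi 0) ∧ Set.BijOn SD (Set.Ioi 0) (Set.Ioi 0) ∧
      ContDiffOn ℝ (⊤ : ℕ∞) SD (Set.Ioi 0)) := by
  have hc : 0 < 1 / n' := by positivity
  set g : ℝ → ℝ := fun x => x ^ 2 / E + x * (x / K) ^ (1 / n') with hgdef
  have hmono : StrictMonoOn g (Set.Ici 0) := aux_mono hE hK hc
  have hinj : Set.InjOn g (Set.Ici 0) := hmono.injOn
  constructor
  · intro s hs
    obtain ⟨σ, hσ, heq⟩ := aux_exists hE hK hc s hs
    refine ⟨σ, ⟨hσ, heq⟩, ?_⟩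
    rintro y ⟨hy, hyeq⟩
    exact hinj (Set.mem_Ici.mpr hy.le) (Set.mem_Ici.mpr hσ.le)
      (show g y = g σ by simp only [hgdef]; rw [hyeq, heq])
  · intro SD hSD
    have hpos : ∀ s : ℝ, 0 < s → 0 < SD s := fun s hs => (hSD s hs).1
    have key : ∀ s : ℝ, 0 < s → g (SD s) = s ^ 2 / E := fun s hs => (hSD s hs).2
    have hSDmono : StrictMonoOn SD (Set.Ioi 0) := by
      intro s hs t ht hst
      simp only [Set.mem_Ioi] at hs ht
      have h1 : g (SD s) < g (SD t) := by
        have hsq : s ^ 2 < t ^ 2 := by nlinarith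
        rw [key s hs, key t ht, div_lt_div_iff₀ hE hE]
        exact mul_lt_mul_of_pos_right hsq hE
      exact (hmono.lt_iff_lt (Set.mem_Ici.mpr (hpos s hs).le)
        (Set.mem_Ici.mpr (hpos t ht).le)).mp h1
    refine ⟨hSDmono, ⟨fun s hs => Set.mem_Ioi.mpr (hpos s (Set.mem_Ioi.mp hs)),
      hSDmono.injOn, ?_⟩, ?_⟩
    · -- surjectivity
      intro t ht
      simp only [Set.mem_Ioi] at ht
      have hgt : 0 < g t := by
        have h1 : 0 < t ^ 2 / E := by positivity
        have h2 : 0 < t * (t / K) ^ (1 / n') := by positivity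
        simp only [hgdef]; linarith
      set s := Real.sqrt (E * g t) with hsdef
      have hs : 0 < s := Real.sqrt_pos.mpr (by positivity)
      have hseq : s ^ 2 = E * g t := Real.sq_sqrt (by positivity)
      have hq : s ^ 2 / E = g t := by rw [hseq]; field_simp
      refine ⟨s, Set.mem_Ioi.mpr hs, ?_⟩
      exact hinj (Set.mem_Ici.mpr (hpos s hs).le) (Set.mem_Ici.mpr ht.le)
        (by rw [key s hs, hq])
    · -- smoothness
      intro s0 hs0
      simp only [Set.mem_Ioi] at hs0
      apply ContDiffAt.contDiffWithinAt
      set a := SD s0 with hadef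
      have ha : 0 < a := hpos s0 hs0
      have haK : a / K ≠ 0 := by positivity
      have hg_smooth : ContDiffAt ℝ (⊤ : ℕ∞) g a := by
        apply ContDiffAt.add
        · exact (contDiffAt_id.pow 2).div_const E
        · exact contDiffAt_id.mul ((contDiffAt_id.div_const K).rpow_const_of_ne haK)
      -- derivative of g at a
      have hrd : HasDerivAt (fun y : ℝ => y ^ (1 / n' : ℝ))
          ((1 / n') * (a / K) ^ ((1 / n') - 1)) (a / K) :=
        Real.hasDerivAt_rpow_const (Or.inl haK)
      have hdivd : HasDerivAt (fun x : ℝ => x / K) (1 / K) a := (hasDerivAt_id a).div_const K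
      have h2 : HasDerivAt (fun x : ℝ => (x / K) ^ (1 / n' : ℝ))
          ((1 / n') * (a / K) ^ ((1 / n') - 1) * (1 / K)) a := by have := hrd.comp a hdivd; exact this
      have h3 : HasDerivAt (fun x : ℝ => x * (x / K) ^ (1 / n' : ℝ))
          (1 * (a / K) ^ (1 / n') + a * ((1 / n') * (a / K) ^ ((1 / n') - 1) * (1 / K))) a :=
        (hasDerivAt_id a).mul h2
      have h1 : HasDerivAt (fun x : ℝ => x ^ 2 / E) (2 * a / E) a := by
        have := (hasDerivAt_pow 2 a).div_const E
        simpa using this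
      set d : ℝ := 2 * a / E + (1 * (a / K) ^ (1 / n') +
        a * ((1 / n') * (a / K) ^ ((1 / n') - 1) * (1 / K))) with hddef
      have hder : HasDerivAt g d a := h1.add h3
      have hdpos : 0 < d := by
        have hp1 : 0 < (a / K) ^ (1 / n' : ℝ) := Real.rpow_pos_of_pos (by positivity) _
        have hp2 : 0 < (a / K) ^ ((1 / n' : ℝ) - 1) := Real.rpow_pos_of_pos (by positivity) _
        have hq1 : 0 < 2 * a / E := by positivity
        have hq2 : 0 < a * ((1 / n') * (a / K) ^ ((1 / n') - 1) * (1 / K)) := by positivity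
        rw [hddef]; nlinarith
      have hfd : HasFDerivAt g
          (↑(ContinuousLinearEquiv.unitsEquivAut ℝ (Units.mk0 d hdpos.ne')) : ℝ →L[ℝ] ℝ) a :=
        hder.hasFDerivAt_equiv hdpos.ne'
      have hS := hg_smooth.hasStrictFDerivAt' hfd (by simp)
      set inv := hg_smooth.localInverse hfd (by simp) with hinvdef
      have hinvCD : ContDiffAt ℝ (⊤ : ℕ∞) inv (g a) := hg_smooth.to_localInverse hfd (by simp)
      have hright : ∀ᶠ y in 𝓝 (g a), g (inv y) = y := hS.eventually_right_inverse
      have hcont : ContinuousAt inv (g a) := hS.localInverse_continuousAt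
      have hiva : inv (g a) = a := hS.localInverse_apply_image
      have hevpos : ∀ᶠ y in 𝓝 (g a), 0 < inv y := by
        have ht := hcont.tendsto
        rw [hiva] at ht
        exact ht.eventually (eventually_gt_nhds ha)
      set q : ℝ → ℝ := fun s => s ^ 2 / E with hqdef
      have hqs0 : q s0 = g a := (key s0 hs0).symm
      have hq_cd : ContDiffAt ℝ (⊤ : ℕ∞) q s0 := (contDiffAt_id.pow 2).div_const E
      have hqt : Tendsto q (𝓝 s0) (𝓝 (g a)) := hqs0 ▸ hq_cd.continuousAt
      have hev : SD =ᶠ[𝓝 s0] fun s => inv (q s) := by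
        filter_upwards [hqt.eventually (hright.and hevpos), eventually_gt_nhds hs0]
          with s hs hspos
        exact hinj (Set.mem_Ici.mpr (hpos s hspos).le) (Set.mem_Ici.mpr hs.2.le)
          (by rw [key s hspos]; exact hs.1.symm)
      have hcomp : ContDiffAt ℝ (⊤ : ℕ∞) (fun s => inv (q s)) s0 :=
        (hqs0 ▸ hinvCD).comp s0 hq_cd
      exact hcomp.congr_of_eventuallyEq hev
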